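/- arXiv:1104.3932 — 2 statements merged into one kernel-verified Lean document; each statement's English description precedes it below -/
import Mathlib

section
/- Let f: X̄ → B̄ be the family over a (compactified, after unramified base change) Teichmüller curve generated by a flat surface in ΩM_g(m_1,...,m_k), with sections S_1,...,S_k given by the zeros, and suppose the relative dualizing sheaf satisfies ω_{X̄/B̄} ≡ f*L + Σ m_j S_j numerically with deg L = χ/2 (maximal Higgs). Then by adjunction S_i² = -χ/(2(m_i+1)). -/
/-- Self-intersection of the zero sections over a Teichmüller curve.  Let
`f : X̄ → B̄` be the family over a compactified Teichmüller curve generated by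
a flat surface in `ΩM_g(m_1,…,m_k)`, with sections `S_1,…,S_k` given by the
zeros.  We work in the real Néron–Severi space `V` with intersection form `B`.
Suppose the relative dualizing sheaf satisfies, numerically,
`ω_{X̄/B̄} = f*L + ∑ m_j S_j` with `deg L = χ/2` (maximal Higgs), the sections
are pairwise disjoint (`S_i · S_j = 0` for `i ≠ j`), `f*L · S_i = deg L = χ/2`
and adjunction gives `S_i² = -ω_{X̄/B̄} · S_i`.  Then
`S_i² = -χ / (2(m_i+1))`. -/
theorem section_self_intersection
    (V : Type*) [AddCommGroup V] [Module ℝ V]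
    (B : V →ₗ[ℝ] V →ₗ[ℝ] ℝ)
    (k : ℕ) (m : Fin k → ℕ) (hm : ∀ i, 1 ≤ m i)
    (ω fL : V) (S : Fin k → V) (χ : ℝ)
    (hnum : ω = fL + ∑ j, (m j : ℝ) • S j)
    (horth : ∀ i j, i ≠ j → B (S i) (S j) = 0)
    (hfL : ∀ i, B fL (S i) = χ / 2)
    (hadj : ∀ i, B (S i) (S i) = - B ω (S i)) :
    ∀ i, B (S i) (S i) = - χ / (2 * ((m i : ℝ) + 1)) := by
  intro i
  have hωS : B ω (S i) = χ / 2 + (m i : ℝ) * B (S i) (S i) := by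
    have hsum : (∑ j, (m j : ℝ) * B (S j) (S i)) = (m i : ℝ) * B (S i) (S i) := by
      rw [Finset.sum_eq_single i]
      · intro j _ hj; rw [horth j i hj, mul_zero]
      · simp
    simp [hnum, map_add, map_sum, map_smul, hfL i, hsum]
  have h := hadj i
  rw [hωS] at h
  have hne : (m i : ℝ) + 1 ≠ 0 := by positivity
  field_simp at h ⊢
  ring_nf at h ⊢
  linarith
end

section
/- Under the hypothesis that every odd theta characteristic parameterized along a Teichmüller curve C in ΩM_g(2,...,2)^odd has exactly one section, and given that C̄ intersects only the boundary component α_0 of S̄_g^-, the vanishing C̄·((g+8)λ - ((g+2)/4)α_0) = 0 together with π*λ = λ, π*δ_0 = α_0 + 2β_0, C̄·β_0 = 0 implies the slope s(C) = 4(g+8)/(g+2). -/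
/-- Slope of Teichmüller curves in `ΩM_g(2,…,2)^odd` via the spin moduli
space.  Let `C̄` be (the lift to `S̄_g^-` of) such a Teichmüller curve, with
intersection numbers `C̄·λ = Clam > 0`, `C̄·α_0 = Cα0`, `C̄·β_0 = Cβ0`, and
`C̄·δ_0 = Cδ0` downstairs in `M̄_g`.  Assume (disjointness from `Z̄_g`, all
odd theta characteristics along `C` having exactly one section, and `C̄`
meeting no boundary component except `α_0`):
`C̄·((g+8)λ - ((g+2)/4)α_0) = 0`, `C̄·β_0 = 0`, and the projection formula
`π*δ_0 = α_0 + 2β_0` giving `Cδ0 = Cα0 + 2Cβ0`.  Then the slope is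
`s(C) = Cδ0/Clam = 4(g+8)/(g+2)`. -/
theorem spin_slope (g : ℕ) (hg : 2 ≤ g) (Clam Cα0 Cβ0 Cδ0 : ℝ)
    (hlam : 0 < Clam)
    (hZ : ((g : ℝ) + 8) * Clam - (((g : ℝ) + 2) / 4) * Cα0 = 0)
    (hβ : Cβ0 = 0)
    (hproj : Cδ0 = Cα0 + 2 * Cβ0) :
    Cδ0 / Clam = 4 * ((g : ℝ) + 8) / ((g : ℝ) + 2) := by
  have hg2 : (g:ℝ) + 2 ≠ 0 := by positivity
  subst hβ hproj
  have : Cα0 = 4 * ((g:ℝ)+8) * Clam / ((g:ℝ)+2) := by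
    field_simp at hZ ⊢; linarith
  rw [this]; field_simp; ring
end
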